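/- Let ρ_1 = diag(1/2, 1/2, 0) and ρ_2 = diag(1/2, 0, 1/2) in M_3 (commuting quantum states). There is no positive trace-preserving linear map T̃ : M_3 → M_2 with T̃(ρ_1) = [[1,0],[0,0]] and T̃(ρ_2) = [[0,0],[0,1]], even though the linear map determined by these two assignments is positive and trace-preserving on span{ρ_1, ρ_2}. -/

import Mathlib

open scoped Kronecker ComplexOrder Matrix.Norms.L2Operator
open Matrix Filter Classical

/-- `M_d`, the algebra of `d × d` complex matrices. -/
abbrev Mat (d : ℕ) := Matrix (Fin d) (Fin d) ℂ

/-- A linear map `T : S → M_{d'}` on a subspace `S ⊆ M_d` is completely positive if for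
every `n` and every positive semidefinite `P = Σ_j X_j ⊗ K_j` with `X_j ∈ S`, `K_j ∈ M_n`,
the matrix `(T ⊗ id_n)(P) = Σ_j T(X_j) ⊗ K_j` is positive semidefinite. -/
def IsCPOn {d d' : ℕ} (S : Submodule ℂ (Mat d)) (T : S →ₗ[ℂ] Mat d') : Prop :=
  ∀ (n m : ℕ) (X : Fin m → S) (K : Fin m → Matrix (Fin n) (Fin n) ℂ),
    (∑ j, (X j : Mat d) ⊗ₖ K j).PosSemidef →
    (∑ j, (T (X j)) ⊗ₖ K j).PosSemidef

/-- Complete positivity for a linear map defined on all of `M_d`. -/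
def IsCP {d d' : ℕ} (T : Mat d →ₗ[ℂ] Mat d') : Prop :=
  ∀ (n m : ℕ) (X : Fin m → Mat d) (K : Fin m → Matrix (Fin n) (Fin n) ℂ),
    (∑ j, X j ⊗ₖ K j).PosSemidef →
    (∑ j, T (X j) ⊗ₖ K j).PosSemidef

noncomputable def rho151 : Mat 3 := !![1/2, 0, 0; 0, 1/2, 0; 0, 0, 0]
noncomputable def rho152 : Mat 3 := !![1/2, 0, 0; 0, 0, 0; 0, 0, 1/2]
def psi0 : Mat 2 := !![1, 0; 0, 0]
def psi1 : Mat 2 := !![0, 0; 0, 1]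

/-! On `span{ρ₁, ρ₂}` everything is diagonal, and `a ρ₁ + b ρ₂ ≥ 0` already forces `a, b ≥ 0`.
For the extension, `E = diag(1, 0, 0)` satisfies `E ≤ 2ρ₁` and `E ≤ 2ρ₂`. A positive `T` with
`T ρ₁ = |0⟩⟨0|`, `T ρ₂ = |1⟩⟨1|` would give `0 ≤ T E ≤ 2|0⟩⟨0|` and `T E ≤ 2|1⟩⟨1|`, so both
diagonal entries of `T E` vanish and `tr (T E) = 0 ≠ 1 = tr E`. -/

lemma Matrix.PosSemidef.apply_self_eq_zero_of_sub {n R : Type*} [Ring R] [PartialOrder R]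
    [IsOrderedAddMonoid R] [StarRing R] {X D : Matrix n n R} (hX : X.PosSemidef)
    (hDX : (D - X).PosSemidef) {i : n} (hD : D i i = 0) : X i i = 0 :=
  le_antisymm (by simpa [hD] using hDX.diag_nonneg (i := i)) hX.diag_nonneg

lemma rho151_eq_diagonal : rho151 = diagonal ![1/2, 1/2, 0] := (diagonal_vec3 _ _ _).symm

lemma rho152_eq_diagonal : rho152 = diagonal ![1/2, 0, 1/2] := (diagonal_vec3 _ _ _).symm

lemma psi0_eq_diagonal : psi0 = diagonal ![1, 0] := (diagonal_vec2 _ _).symm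

lemma psi1_eq_diagonal : psi1 = diagonal ![0, 1] := (diagonal_vec2 _ _).symm

lemma smul_rho151_add_smul_rho152 (a b : ℂ) :
    a • rho151 + b • rho152 = diagonal ![(a + b) / 2, a / 2, b / 2] := by
  rw [rho151_eq_diagonal, rho152_eq_diagonal, ← diagonal_smul, ← diagonal_smul, diagonal_add]
  congr 1
  ext i; fin_cases i <;> simp [div_eq_mul_inv, add_mul]

lemma smul_psi0_add_smul_psi1 (a b : ℂ) : a • psi0 + b • psi1 = diagonal ![a, b] := by
  rw [psi0_eq_diagonal, psi1_eq_diagonal, ← diagonal_smul, ← diagonal_smul, diagonal_add]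
  congr 1
  ext i; fin_cases i <;> simp

lemma two_smul_rho151_sub_posSemidef : ((2 : ℂ) • rho151 - diagonal ![1, 0, 0]).PosSemidef := by
  rw [rho151_eq_diagonal, ← diagonal_smul, diagonal_sub, posSemidef_diagonal_iff]
  intro i; fin_cases i <;> norm_num

lemma two_smul_rho152_sub_posSemidef : ((2 : ℂ) • rho152 - diagonal ![1, 0, 0]).PosSemidef := by
  rw [rho152_eq_diagonal, ← diagonal_smul, diagonal_sub, posSemidef_diagonal_iff]
  intro i; fin_cases i <;> norm_num

/-- The map `ρ_1 ↦ |0⟩⟨0|`, `ρ_2 ↦ |1⟩⟨1|` is positive and trace-preserving on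
`span{ρ_1, ρ_2}` but has no positive trace-preserving extension `M_3 → M_2`. -/
theorem stmt15 :
    (∀ a b : ℂ, (a • rho151 + b • rho152).PosSemidef → (a • psi0 + b • psi1).PosSemidef) ∧
    (∀ a b : ℂ, (a • rho151 + b • rho152).trace = (a • psi0 + b • psi1).trace) ∧
    ¬ ∃ T : Mat 3 →ₗ[ℂ] Mat 2,
        (∀ A : Mat 3, A.PosSemidef → (T A).PosSemidef) ∧
        (∀ X : Mat 3, (T X).trace = X.trace) ∧
        T rho151 = psi0 ∧ T rho152 = psi1 := by
  refine ⟨fun a b h => ?_, fun a b => ?_, ?_⟩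
  · rw [smul_rho151_add_smul_rho152, posSemidef_diagonal_iff] at h
    rw [smul_psi0_add_smul_psi1, posSemidef_diagonal_iff]
    have two_nonneg : (0 : ℂ) ≤ 2 := by norm_num
    intro i; fin_cases i
    · simpa [mul_div_cancel₀] using mul_nonneg two_nonneg (h 1)
    · simpa [mul_div_cancel₀] using mul_nonneg two_nonneg (h 2)
  · simp only [smul_rho151_add_smul_rho152, smul_psi0_add_smul_psi1, trace_diagonal,
      Fin.sum_univ_three, Fin.sum_univ_two, cons_val_zero, cons_val_one, cons_val]
    ring
  · rintro ⟨T, hpos, htr, hT1, hT2⟩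
    set E : Mat 3 := diagonal ![1, 0, 0]
    have hTE : (T E).PosSemidef := hpos E (by simp [E, Fin.forall_fin_succ])
    have hT00 : T E 0 0 = 0 := hTE.apply_self_eq_zero_of_sub (D := (2 : ℂ) • psi1)
      (by simpa [hT2] using hpos _ two_smul_rho152_sub_posSemidef) (by simp [psi1])
    have hT11 : T E 1 1 = 0 := hTE.apply_self_eq_zero_of_sub (D := (2 : ℂ) • psi0)
      (by simpa [hT1] using hpos _ two_smul_rho151_sub_posSemidef) (by simp [psi0])
    simpa [trace, Fin.sum_univ_two, Fin.sum_univ_three, hT00, hT11, E] using htr E
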